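/- arXiv:2407.17796 — 3 statements merged into one kernel-verified Lean document; each statement's English description precedes it below -/
import Mathlib

section
/- For all X, Y ∈ B_q(n), one has φ^{dim X}·q^{dim X(dim X−1)/2}·A_n(X,Y) = φ^{dim Y}·q^{dim Y(dim Y−1)/2}·A_n(Y,X). Consequently A_n is self-adjoint with respect to the weighted inner product ⟨,⟩_π, i.e., ⟨A_n u, v⟩_π = ⟨u, A_n v⟩_π for all u, v : B_q(n) → ℝ. -/
open Module

open Classical in
noncomputable def adjEnt (q : ℕ) (φ : ℝ) {F : Type} [Field F] {V : Type} [AddCommGroup V]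
    [Module F V] (X Y : Submodule F V) : ℝ :=
  if Y ≤ X ∧ finrank F X = finrank F Y + 1 then 1
  else if X ≤ Y ∧ finrank F Y = finrank F X + 1 then φ * (q : ℝ) ^ finrank F X
  else if X = Y then ((φ - 1) / ((q : ℝ) - 1)) * (q : ℝ) ^ finrank F X
  else 0

noncomputable def piw (q : ℕ) (φ : ℝ) (m d : ℕ) : ℝ :=
  φ ^ d * (q : ℝ) ^ (d * (d - 1) / 2) / ∏ k ∈ Finset.range m, (1 + φ * (q : ℝ) ^ k)

noncomputable instance (F V : Type) [Field F] [AddCommGroup V] [Module F V] [Finite V] :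
    Fintype (Submodule F V) := Fintype.ofFinite _

lemma tri_aux (b : ℕ) : (b + 1) * ((b + 1) - 1) / 2 = b * (b - 1) / 2 + b := by
  rw [← Nat.choose_two_right, ← Nat.choose_two_right, Nat.choose_succ_succ]
  simp [Nat.add_comm]

lemma adjEnt_symm (q : ℕ) (φ : ℝ) {F : Type} [Field F] {V : Type} [AddCommGroup V]
    [Module F V] (X Y : Submodule F V) :
    φ ^ finrank F X * (q : ℝ) ^ (finrank F X * (finrank F X - 1) / 2) * adjEnt q φ X Y =
      φ ^ finrank F Y * (q : ℝ) ^ (finrank F Y * (finrank F Y - 1) / 2) * adjEnt q φ Y X := by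
  classical
  unfold adjEnt
  by_cases h1 : Y ≤ X ∧ finrank F X = finrank F Y + 1
  · rw [if_pos h1]
    have hne : ¬(X ≤ Y ∧ finrank F Y = finrank F X + 1) := by
      rintro ⟨-, h⟩; omega
    rw [if_neg hne, if_pos h1, h1.2, tri_aux, pow_add, pow_succ]
    ring
  · rw [if_neg h1]
    by_cases h2 : X ≤ Y ∧ finrank F Y = finrank F X + 1
    · rw [if_pos h2, if_pos h2, h2.2, tri_aux, pow_add, pow_succ]
      ring
    · rw [if_neg h2]
      by_cases h3 : X = Y
      · subst h3
        rw [if_neg h1, if_neg h2]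
      · rw [if_neg h3, if_neg h2, if_neg h1, if_neg (Ne.symm h3)]
        ring

lemma piw_adjEnt_symm (q n : ℕ) (φ : ℝ) {F : Type} [Field F] {V : Type} [AddCommGroup V]
    [Module F V] (X Y : Submodule F V) :
    piw q φ n (finrank F X) * adjEnt q φ X Y =
      piw q φ n (finrank F Y) * adjEnt q φ Y X := by
  unfold piw
  rw [div_mul_eq_mul_div, div_mul_eq_mul_div, adjEnt_symm]

theorem stmt_4 (q n : ℕ) (F : Type) [Field F] [Fintype F] (hq : Fintype.card F = q)
    (φ : ℝ) (hφ : 0 < φ) :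
    (∀ X Y : Submodule F (Fin n → F),
      φ ^ finrank F X * (q : ℝ) ^ (finrank F X * (finrank F X - 1) / 2) * adjEnt q φ X Y =
        φ ^ finrank F Y * (q : ℝ) ^ (finrank F Y * (finrank F Y - 1) / 2) * adjEnt q φ Y X) ∧
    (∀ u v : Submodule F (Fin n → F) → ℝ,
      ∑ X : Submodule F (Fin n → F),
          ((Matrix.of fun X Y : Submodule F (Fin n → F) => adjEnt q φ X Y).mulVec u) X * v X *
            piw q φ n (finrank F X) =
        ∑ X : Submodule F (Fin n → F),
          u X * ((Matrix.of fun X Y : Submodule F (Fin n → F) => adjEnt q φ X Y).mulVec v) X *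
            piw q φ n (finrank F X)) := by
  constructor
  · intro X Y
    exact adjEnt_symm q φ X Y
  · intro u v
    simp only [Matrix.mulVec, dotProduct, Matrix.of_apply, Finset.sum_mul,
      Finset.mul_sum]
    rw [Finset.sum_comm]
    refine Finset.sum_congr rfl fun X _ => Finset.sum_congr rfl fun Y _ => ?_
    have h := piw_adjEnt_symm q n φ (F := F) X Y
    linear_combination u X * v Y * h.symm
end

section
/- Let X, Y ∈ B∂(n+1) with X ⊆ Y and dim Y = dim X + 1 (Y covers X). Then: (a) for every Y' ∈ B∂(n+1) with Y' ∩ H₀ = Y ∩ H₀, the number of X' ∈ B∂(n+1) with X' ∩ H₀ = X ∩ H₀ and X' ⊆ Y' equals q; and (b) for every X' ∈ B∂(n+1) with X' ∩ H₀ = X ∩ H₀, the number of Y' ∈ B∂(n+1) with Y' ∩ H₀ = Y ∩ H₀ and X' ⊆ Y' equals 1. (That is, the bipartite graph of covering relations between [Y] and [X] is biregular with degrees q on the [Y] side and 1 on the [X] side.) -/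
open Module

noncomputable def H0 (F : Type) [Field F] (n : ℕ) : Submodule F (Fin (n + 1) → F) :=
  LinearMap.ker (LinearMap.proj (R := F) (φ := fun _ : Fin (n + 1) => F) (Fin.last n))

def gmap (F : Type) [Field F] (n : ℕ) (a : Fin n → F) :
    (Fin (n + 1) → F) →ₗ[F] (Fin (n + 1) → F) where
  toFun v := v + v (Fin.last n) • (Fin.snoc a 0 : Fin (n + 1) → F)
  map_add' u v := by
    funext i
    simp only [Pi.add_apply, Pi.smul_apply, smul_eq_mul]
    ring
  map_smul' c v := by
    funext i
    simp only [Pi.add_apply, Pi.smul_apply, smul_eq_mul, RingHom.id_apply]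
    ring

section Aux

variable {F : Type} [Field F] {n : ℕ}

lemma mem_H0 {v : Fin (n + 1) → F} : v ∈ H0 F n ↔ v (Fin.last n) = 0 := Iff.rfl

lemma exists_last_one {Z : Submodule F (Fin (n + 1) → F)} (hZ : ¬ Z ≤ H0 F n) :
    ∃ w ∈ Z, w (Fin.last n) = 1 := by
  obtain ⟨w, hwZ, hw⟩ := SetLike.not_le_iff_exists.mp hZ
  have hne : w (Fin.last n) ≠ 0 := fun h => hw (mem_H0.mpr h)
  refine ⟨(w (Fin.last n))⁻¹ • w, Z.smul_mem _ hwZ, ?_⟩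
  simp [inv_mul_cancel₀ hne]

lemma sup_span_inf_H0 {A : Submodule F (Fin (n + 1) → F)} (hA : A ≤ H0 F n)
    {w : Fin (n + 1) → F} (hw : w (Fin.last n) = 1) :
    (A ⊔ Submodule.span F {w}) ⊓ H0 F n = A := by
  apply le_antisymm
  · intro x hx
    rw [Submodule.mem_inf] at hx
    obtain ⟨hx, hx0⟩ := hx
    obtain ⟨a, ha, z, hz, rfl⟩ := Submodule.mem_sup.mp hx
    obtain ⟨c, rfl⟩ := Submodule.mem_span_singleton.mp hz
    have ha0 : a (Fin.last n) = 0 := hA ha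
    have hc : c = 0 := by
      have h0 := mem_H0.mp hx0
      simpa [ha0, hw] using h0
    simpa [hc] using ha
  · exact le_inf le_sup_left hA

lemma eq_inf_sup_span {Z : Submodule F (Fin (n + 1) → F)} {w : Fin (n + 1) → F}
    (hwZ : w ∈ Z) (hw : w (Fin.last n) = 1) :
    Z = (Z ⊓ H0 F n) ⊔ Submodule.span F {w} := by
  apply le_antisymm
  · intro z hz
    have h1 : z - z (Fin.last n) • w ∈ Z ⊓ H0 F n := by
      refine Submodule.mem_inf.mpr ⟨Z.sub_mem hz (Z.smul_mem _ hwZ), ?_⟩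
      simp [mem_H0, hw]
    have h2 : z (Fin.last n) • w ∈ Submodule.span F {w} :=
      Submodule.smul_mem _ _ (Submodule.mem_span_singleton_self w)
    have h3 := Submodule.add_mem_sup h1 h2
    simpa using h3
  · exact sup_le inf_le_left ((Submodule.span_singleton_le_iff_mem w Z).mpr hwZ)

lemma finrank_sup_span {A : Submodule F (Fin (n + 1) → F)} {w : Fin (n + 1) → F}
    (hw : w ∉ A) :
    finrank F ↥(A ⊔ Submodule.span F {w}) = finrank F ↥A + 1 := by
  have hw0 : w ≠ 0 := fun h => hw (h ▸ A.zero_mem)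
  have hinf : A ⊓ Submodule.span F {w} = ⊥ := by
    rw [eq_bot_iff]
    intro x hx
    rw [Submodule.mem_inf] at hx
    obtain ⟨hxA, hxs⟩ := hx
    obtain ⟨c, rfl⟩ := Submodule.mem_span_singleton.mp hxs
    rcases eq_or_ne c 0 with rfl | hc
    · simp
    · exact absurd (by simpa [smul_smul, inv_mul_cancel₀ hc] using A.smul_mem c⁻¹ hxA) hw
  have h := Submodule.finrank_sup_add_finrank_inf_eq A (Submodule.span F {w})
  rw [hinf, finrank_span_singleton hw0] at h
  simpa using h

lemma finrank_eq_inf_add_one {Z : Submodule F (Fin (n + 1) → F)} (hZ : ¬ Z ≤ H0 F n) :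
    finrank F ↥Z = finrank F ↥(Z ⊓ H0 F n) + 1 := by
  obtain ⟨w, hwZ, hw⟩ := exists_last_one hZ
  have hwni : w ∉ Z ⊓ H0 F n := by
    intro h
    have h0 := mem_H0.mp (Submodule.mem_inf.mp h).2
    rw [hw] at h0
    exact one_ne_zero h0
  conv_lhs => rw [eq_inf_sup_span hwZ hw]
  exact finrank_sup_span hwni

end Aux

theorem stmt_11 (q n : ℕ) (F : Type) [Field F] [Fintype F] (hq : Fintype.card F = q)
    (X Y : Submodule F (Fin (n + 1) → F)) (hX : ¬ X ≤ H0 F n) (hY : ¬ Y ≤ H0 F n)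
    (hXY : X ≤ Y) (hcov : finrank F ↥Y = finrank F ↥X + 1) :
    (∀ Y' : Submodule F (Fin (n + 1) → F), ¬ Y' ≤ H0 F n → Y' ⊓ H0 F n = Y ⊓ H0 F n →
      Nat.card {X' : Submodule F (Fin (n + 1) → F) //
        (¬ X' ≤ H0 F n ∧ X' ⊓ H0 F n = X ⊓ H0 F n) ∧ X' ≤ Y'} = q) ∧
    (∀ X' : Submodule F (Fin (n + 1) → F), ¬ X' ≤ H0 F n → X' ⊓ H0 F n = X ⊓ H0 F n →
      Nat.card {Y' : Submodule F (Fin (n + 1) → F) //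
        (¬ Y' ≤ H0 F n ∧ Y' ⊓ H0 F n = Y ⊓ H0 F n) ∧ X' ≤ Y'} = 1) := by
  set A := X ⊓ H0 F n with hAdef
  set B := Y ⊓ H0 F n with hBdef
  have hA_le : A ≤ H0 F n := inf_le_right
  have hB_le : B ≤ H0 F n := inf_le_right
  have hAB : A ≤ B := inf_le_inf_right _ hXY
  have frX : finrank F ↥X = finrank F ↥A + 1 := finrank_eq_inf_add_one hX
  have frY : finrank F ↥Y = finrank F ↥B + 1 := finrank_eq_inf_add_one hY
  have frB : finrank F ↥B = finrank F ↥A + 1 := by omega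
  have hBA : ¬ B ≤ A := by
    intro h
    have := Submodule.finrank_mono h
    omega
  obtain ⟨u, huB, huA⟩ := SetLike.not_le_iff_exists.mp hBA
  have hu0 : u (Fin.last n) = 0 := mem_H0.mp (hB_le huB)
  have hBsup : A ⊔ Submodule.span F {u} = B := by
    refine Submodule.eq_of_le_of_finrank_le
      (sup_le hAB ((Submodule.span_singleton_le_iff_mem u B).mpr huB)) ?_
    rw [finrank_sup_span huA]
    omega
  constructor
  · -- part (a)
    intro Y' hY'0 hY'B
    obtain ⟨v, hvY', hv1⟩ := exists_last_one hY'0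
    have hBY' : B ≤ Y' := hY'B ▸ inf_le_left
    have hw1 : ∀ c : F, (v + c • u) (Fin.last n) = 1 := by
      intro c
      simp [hv1, hu0]
    have hmemi : ∀ c : F, v + c • u ∈ A ⊔ Submodule.span F {v + c • u} :=
      fun c => Submodule.mem_sup_right (Submodule.mem_span_singleton_self _)
    set f : F → {X' : Submodule F (Fin (n + 1) → F) //
        (¬ X' ≤ H0 F n ∧ X' ⊓ H0 F n = X ⊓ H0 F n) ∧ X' ≤ Y'} := fun c =>
      ⟨A ⊔ Submodule.span F {v + c • u},
        ⟨⟨fun h => by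
            have h0 := mem_H0.mp (h (hmemi c))
            rw [hw1 c] at h0
            exact one_ne_zero h0,
          sup_span_inf_H0 hA_le (hw1 c)⟩,
         sup_le (le_trans hAB hBY')
           ((Submodule.span_singleton_le_iff_mem _ Y').mpr
             (Y'.add_mem hvY' (Y'.smul_mem c (hBY' huB))))⟩⟩ with hf
    have hbij : Function.Bijective f := by
      constructor
      · intro c c' hcc
        have heq : A ⊔ Submodule.span F {v + c • u} = A ⊔ Submodule.span F {v + c' • u} :=
          congrArg Subtype.val hcc
        by_contra hne
        have hm1 : v + c • u ∈ A ⊔ Submodule.span F {v + c' • u} := heq ▸ hmemi c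
        have hdiff : (c - c') • u ∈ (A ⊔ Submodule.span F {v + c' • u}) ⊓ H0 F n := by
          refine Submodule.mem_inf.mpr ⟨?_, ?_⟩
          · have := Submodule.sub_mem _ hm1 (hmemi c')
            have hrw : (v + c • u) - (v + c' • u) = (c - c') • u := by
              funext i; simp [Pi.smul_apply, smul_eq_mul]; ring
            rwa [hrw] at this
          · rw [mem_H0]
            simp [hu0]
        rw [sup_span_inf_H0 hA_le (hw1 c')] at hdiff
        have hcc' : c - c' ≠ 0 := sub_ne_zero_of_ne hne
        exact huA (by simpa [smul_smul, inv_mul_cancel₀ hcc'] using A.smul_mem (c - c')⁻¹ hdiff)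
      · rintro ⟨X', ⟨hX'0, hX'A⟩, hX'Y'⟩
        obtain ⟨w, hwX', hwl⟩ := exists_last_one hX'0
        have hAX' : A ≤ X' := by rw [hAdef, ← hX'A]; exact inf_le_left
        have hwv : w - v ∈ B := by
          rw [← hY'B]
          refine Submodule.mem_inf.mpr ⟨Y'.sub_mem (hX'Y' hwX') hvY', ?_⟩
          rw [mem_H0]
          simp [hwl, hv1]
        rw [← hBsup] at hwv
        obtain ⟨a, ha, z, hz, hsum⟩ := Submodule.mem_sup.mp hwv
        obtain ⟨c, rfl⟩ := Submodule.mem_span_singleton.mp hz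
        refine ⟨c, ?_⟩
        have hvcu : v + c • u ∈ X' := by
          have hw' : w = a + c • u + v := by rw [hsum]; abel
          have heq : v + c • u = w - a := by rw [hw']; abel
          rw [heq]
          exact X'.sub_mem hwX' (hAX' ha)
        have hle : A ⊔ Submodule.span F {v + c • u} ≤ X' :=
          sup_le hAX' ((Submodule.span_singleton_le_iff_mem _ X').mpr hvcu)
        have hfr : finrank F ↥X' ≤ finrank F ↥(A ⊔ Submodule.span F {v + c • u}) := by
          have h1 : finrank F ↥X' = finrank F ↥A + 1 := by
            rw [finrank_eq_inf_add_one hX'0, hX'A, ← hAdef]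
          have h2 : v + c • u ∉ A := by
            intro h
            have h0 := mem_H0.mp (hA_le h)
            rw [hw1 c] at h0
            exact one_ne_zero h0
          rw [finrank_sup_span h2, h1]
        have := Submodule.eq_of_le_of_finrank_le hle hfr
        exact Subtype.ext this
    rw [Nat.card_congr (Equiv.ofBijective f hbij).symm, Nat.card_eq_fintype_card, hq]
  · -- part (b)
    intro X' hX'0 hX'A
    obtain ⟨w, hwX', hwl⟩ := exists_last_one hX'0
    have hAX' : A ≤ X' := hX'A ▸ inf_le_left
    rw [Nat.card_eq_one_iff_unique]
    have hY0w : w ∈ B ⊔ Submodule.span F {w} :=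
      Submodule.mem_sup_right (Submodule.mem_span_singleton_self _)
    have hY0not : ¬ (B ⊔ Submodule.span F {w}) ≤ H0 F n := by
      intro h
      have h0 := mem_H0.mp (h hY0w)
      rw [hwl] at h0
      exact one_ne_zero h0
    have hY0inf : (B ⊔ Submodule.span F {w}) ⊓ H0 F n = B := sup_span_inf_H0 hB_le hwl
    have hX'le : X' ≤ B ⊔ Submodule.span F {w} := by
      conv_lhs => rw [eq_inf_sup_span hwX' hwl]
      exact sup_le (hX'A ▸ le_trans hAB le_sup_left) le_sup_right
    constructor
    · constructor
      intro Y₁ Y₂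
      have key : ∀ Y' : {Y' : Submodule F (Fin (n + 1) → F) //
          (¬ Y' ≤ H0 F n ∧ Y' ⊓ H0 F n = Y ⊓ H0 F n) ∧ X' ≤ Y'},
          (Y' : Submodule F (Fin (n + 1) → F)) = B ⊔ Submodule.span F {w} := by
        rintro ⟨Y', ⟨hY'0, hY'B⟩, hX'Y'⟩
        have hle : B ⊔ Submodule.span F {w} ≤ Y' :=
          sup_le (by rw [hBdef, ← hY'B]; exact inf_le_left)
            ((Submodule.span_singleton_le_iff_mem _ Y').mpr (hX'Y' hwX'))
        refine (Submodule.eq_of_le_of_finrank_le hle ?_).symm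
        rw [finrank_eq_inf_add_one hY'0, hY'B, ← hBdef, finrank_eq_inf_add_one hY0not, hY0inf]
      exact Subtype.ext ((key Y₁).trans (key Y₂).symm)
    · exact ⟨⟨B ⊔ Submodule.span F {w}, ⟨hY0not, hY0inf⟩, hX'le⟩⟩
end

section
/- Let 0 ≤ k ≤ n and let v : B_q(n) → ℝ satisfy A_n v = λ_{n,k} v, where λ_{m,j} = (φ·q^{m−j} − q^j)/(q−1). Then A_{n+1}(q^k·ι(v) + θ_n(v)) = λ_{n+1,k}·(q^k·ι(v) + θ_n(v)) and A_{n+1}(φ·q^{n−k}·ι(v) − θ_n(v)) = λ_{n+1,k+1}·(φ·q^{n−k}·ι(v) − θ_n(v)). -/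
/-!
Write `H = ker f` for the hyperplane and `Z = X ⊓ H`. On `X ≤ H`, `A` sends `ι(v)` to
`λ ι(v)` and `θ(v)` to `φ q^n ι(v)`, because `X` has exactly `q^(n - dim X)` upper covers
off `H`. On `X ⊄ H`, `A ι(v)` takes the value `v(Z)` and `A θ(v)` the value
`q (A_n v)(Z) = q λ v(Z)`: the upper covers of `X` correspond to the upper covers of `Z`
inside `H` via `Y ↦ Y ⊓ H`, and the lower covers of `X` off `H` lie `q`-to-one over the
lower covers of `Z`. So `A` preserves the span of `ι(v)` and `θ(v)`, acting there by
`[[λ, φ q^n], [1, q λ]]`, whose eigenvalues are `λ_{n+1,k}` and `λ_{n+1,k+1}`.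
-/

open Module

noncomputable def lamEV (q : ℕ) (φ : ℝ) (n k : ℕ) : ℝ :=
  (φ * (q : ℝ) ^ (n - k) - (q : ℝ) ^ k) / ((q : ℝ) - 1)

open Classical in
noncomputable instance (F : Type) [Field F] [Fintype F] (n : ℕ) :
    Fintype {X : Submodule F (Fin (n + 1) → F) // X ≤ H0 F n} := Fintype.ofFinite _

-- `ι(v)`: extend a vector on `B_q(n)` (identified with the subspaces of `F^{n+1}`
-- contained in the hyperplane `H₀`) by zero on `B∂(n+1)`.
open Classical in
noncomputable def iota (F : Type) [Field F] [Fintype F] (n : ℕ)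
    (v : {X : Submodule F (Fin (n + 1) → F) // X ≤ H0 F n} → ℝ) :
    Submodule F (Fin (n + 1) → F) → ℝ :=
  fun X => if h : X ≤ H0 F n then v ⟨X, h⟩ else 0

-- `θ_n(v)`: the vector on `B_q(n+1)` vanishing on subspaces contained in `H₀` and with
-- value `v(Y ∩ H₀)` at each `Y ∈ B∂(n+1)`.
open Classical in
noncomputable def theta (F : Type) [Field F] [Fintype F] (n : ℕ)
    (v : {X : Submodule F (Fin (n + 1) → F) // X ≤ H0 F n} → ℝ) :
    Submodule F (Fin (n + 1) → F) → ℝ :=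
  fun Y => if Y ≤ H0 F n then 0 else v ⟨Y ⊓ H0 F n, inf_le_right⟩

open Module Submodule Finset Matrix
open LinearMap (ker)

section Hyperplane

open scoped Classical

variable {F V : Type} [Field F] [AddCommGroup V] [Module F V] [Fintype V]

noncomputable def lowerCovers (X : Submodule F V) : Finset (Submodule F V) :=
  {Y | Y ≤ X ∧ finrank F X = finrank F Y + 1}

noncomputable def upperCovers (X : Submodule F V) : Finset (Submodule F V) :=
  {Y | X ≤ Y ∧ finrank F Y = finrank F X + 1}

@[simp]
lemma mem_lowerCovers {X Y : Submodule F V} :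
    Y ∈ lowerCovers X ↔ Y ≤ X ∧ finrank F X = finrank F Y + 1 := by
  simp [lowerCovers]

@[simp]
lemma mem_upperCovers {X Y : Submodule F V} :
    Y ∈ upperCovers X ↔ X ≤ Y ∧ finrank F Y = finrank F X + 1 := by
  simp [upperCovers]

lemma mulVec_adjEnt_apply (q : ℕ) (φ : ℝ) (w : Submodule F V → ℝ) (X : Submodule F V) :
    ((Matrix.of fun X Y : Submodule F V => adjEnt q φ X Y) *ᵥ w) X =
      ∑ Y ∈ lowerCovers X, w Y + φ * q ^ finrank F X * ∑ Y ∈ upperCovers X, w Y +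
        (φ - 1) / (q - 1) * q ^ finrank F X * w X := by
  have hterm : ∀ Y, adjEnt q φ X Y * w Y =
      (if Y ∈ lowerCovers X then w Y else 0) +
        φ * q ^ finrank F X * (if Y ∈ upperCovers X then w Y else 0) +
        (if X = Y then (φ - 1) / (q - 1) * q ^ finrank F X * w Y else 0) := by
    intro Y
    simp only [adjEnt, mem_lowerCovers, mem_upperCovers]
    split_ifs <;> first | ring1 | grind
  simp only [Matrix.mulVec, dotProduct, Matrix.of_apply, hterm, sum_add_distrib, ← mul_sum,
    sum_ite_mem, univ_inter, sum_ite_eq, mem_univ, if_true]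

variable (f : V →ₗ[F] F)

omit [Fintype V] in
lemma exists_mem_apply_eq_one {X : Submodule F V} (hX : ¬ X ≤ ker f) :
    ∃ x ∈ X, f x = 1 := by
  obtain ⟨y, hyX, hy⟩ := SetLike.not_le_iff_exists.mp hX
  refine ⟨(f y)⁻¹ • y, X.smul_mem _ hyX, ?_⟩
  rw [map_smul, smul_eq_mul, inv_mul_cancel₀ hy]

lemma finrank_inf_ker_add_one {X : Submodule F V} (hX : ¬ X ≤ ker f) :
    finrank F (X ⊓ ker f : Submodule F V) + 1 = finrank F X := by
  obtain ⟨x, hxX, hx⟩ := exists_mem_apply_eq_one f hX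
  have hx' : x ∉ X ⊓ ker f := fun h => by simp_all
  have hsup : X ⊓ ker f ⊔ span F {x} = X := by
    refine le_antisymm (sup_le inf_le_left (span_singleton_le_iff_mem _ _ |>.mpr hxX)) ?_
    intro y hy
    have hdecomp : y = (y - f y • x) + f y • x := by abel
    rw [hdecomp]
    refine add_mem (mem_sup_left ⟨X.sub_mem hy (X.smul_mem _ hxX), ?_⟩)
      (mem_sup_right (smul_mem _ _ (mem_span_singleton_self x)))
    simp [hx]
  rw [← finrank_sup_span_singleton hx', hsup]

lemma inf_ker_eq_of_le_of_finrank_eq {W Y : Submodule F V} (hW : W ≤ ker f) (hWY : W ≤ Y)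
    (hY : ¬ Y ≤ ker f) (hrank : finrank F Y = finrank F W + 1) : Y ⊓ ker f = W :=
  (eq_of_le_of_finrank_eq (le_inf hWY hW) (by have := finrank_inf_ker_add_one f hY; omega)).symm

lemma finrank_sup_span_of_apply_eq_one {W : Submodule F V} (hW : W ≤ ker f) {y : V}
    (hy : f y = 1) : finrank F (W ⊔ span F {y} : Submodule F V) = finrank F W + 1 :=
  finrank_sup_span_singleton fun h => by simpa [hy] using hW h

lemma finrank_sup_of_inf_ker_le {X U : Submodule F V} (hXU : X ⊓ ker f ≤ U)
    (hU : U ≤ ker f) (hX : ¬ X ≤ ker f) :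
    finrank F (X ⊔ U : Submodule F V) = finrank F U + 1 := by
  have hinf : X ⊓ U = X ⊓ ker f :=
    le_antisymm (inf_le_inf_left _ hU) (le_inf inf_le_left hXU)
  have := finrank_sup_add_finrank_inf_eq X U
  rw [hinf] at this
  have := finrank_inf_ker_add_one f hX
  omega

lemma sum_upperCovers_inf_ker {X : Submodule F V} (hX : ¬ X ≤ ker f)
    (u : Submodule F V → ℝ) :
    ∑ Y ∈ upperCovers X, u (Y ⊓ ker f) =
      ∑ U ∈ upperCovers (X ⊓ ker f) with U ≤ ker f, u U := by
  have hX' := finrank_inf_ker_add_one f hX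
  refine sum_nbij' (· ⊓ ker f) (X ⊔ ·) ?_ ?_ ?_ ?_ fun _ _ => rfl
  · intro Y hY
    simp only [mem_filter, mem_upperCovers] at hY ⊢
    have hY' := finrank_inf_ker_add_one f fun h => hX (hY.1.trans h)
    exact ⟨⟨inf_le_inf_right _ hY.1, by omega⟩, inf_le_right⟩
  · intro U hU
    simp only [mem_filter, mem_upperCovers] at hU ⊢
    have := finrank_sup_of_inf_ker_le f hU.1.1 hU.2 hX
    exact ⟨le_sup_left, by omega⟩
  · intro Y hY
    rw [mem_upperCovers] at hY
    have hY' := finrank_inf_ker_add_one f fun h => hX (hY.1.trans h)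
    have := finrank_sup_of_inf_ker_le f (inf_le_inf_right _ hY.1) inf_le_right hX
    exact eq_of_le_of_finrank_eq (sup_le hY.1 inf_le_left) (by omega)
  · intro U hU
    simp only [mem_filter, mem_upperCovers] at hU
    rw [sup_comm, sup_inf_assoc_of_le _ hU.2, sup_eq_left.mpr hU.1.1]

variable [Fintype F]

lemma card_filter_mem_apply_eq_one {Y : Submodule F V} (hY : ¬ Y ≤ ker f) :
    #{y | y ∈ Y ∧ f y = 1} = Fintype.card F ^ finrank F (Y ⊓ ker f : Submodule F V) := by
  obtain ⟨y₀, hy₀Y, hy₀⟩ := exists_mem_apply_eq_one f hY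
  rw [← card_eq_pow_finrank, Fintype.card_subtype]
  refine card_nbij' (· - y₀) (· + y₀) ?_ ?_ (fun _ _ => sub_add_cancel ..)
    (fun _ _ => add_sub_cancel_right ..)
  · intro y hy
    simp only [coe_filter, Set.mem_ofPred_eq, mem_univ, true_and] at hy ⊢
    exact ⟨Y.sub_mem hy.1 hy₀Y, by simp [hy.2, hy₀]⟩
  · intro y hy
    simp only [coe_filter, Set.mem_ofPred_eq, mem_univ, true_and, Submodule.mem_inf,
      LinearMap.mem_ker] at hy ⊢
    exact ⟨Y.add_mem hy.1 hy₀Y, by simp [hy.2, hy₀]⟩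

/-- Counting the vectors `y ∈ T` with `f y = 1` by the cover `W ⊔ ⟨y⟩` of `W` they span:
each such cover `Y` is hit by the `q ^ dim W` vectors of the affine hyperplane `Y ∩ f⁻¹ 1`. -/
lemma pow_finrank_mul_card_upperCovers_not_le_ker {W T : Submodule F V}
    (hW : W ≤ ker f) (hWT : W ≤ T) (hT : ¬ T ≤ ker f) :
    Fintype.card F ^ finrank F W * #{Y ∈ upperCovers W | Y ≤ T ∧ ¬ Y ≤ ker f} =
      Fintype.card F ^ finrank F (T ⊓ ker f : Submodule F V) := by
  set S : Finset V := {y | y ∈ T ∧ f y = 1}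
  set C : Finset (Submodule F V) := {Y ∈ upperCovers W | Y ≤ T ∧ ¬ Y ≤ ker f}
  have hspan_le {y : V} {Y : Submodule F V} (hy : y ∈ Y) : span F {y} ≤ Y :=
    (span_singleton_le_iff_mem _ _).mpr hy
  have hmaps : Set.MapsTo (fun y => W ⊔ span F {y}) S C := by
    intro y hy
    simp only [S, C, coe_filter, mem_univ, true_and, Set.mem_ofPred_eq, mem_upperCovers] at hy ⊢
    refine ⟨⟨le_sup_left, finrank_sup_span_of_apply_eq_one f hW hy.2⟩,
      sup_le hWT (hspan_le hy.1), fun h => ?_⟩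
    simpa [hy.2] using h (mem_sup_right (mem_span_singleton_self y))
  have hfiber : ∀ Y ∈ C, #{y ∈ S | W ⊔ span F {y} = Y} = Fintype.card F ^ finrank F W := by
    intro Y hY
    simp only [C, mem_filter, mem_upperCovers] at hY
    obtain ⟨⟨hWY, hrank⟩, hYT, hY⟩ := hY
    have hcard := card_filter_mem_apply_eq_one f hY
    rw [inf_ker_eq_of_le_of_finrank_eq f hW hWY hY hrank] at hcard
    rw [← hcard, filter_filter]
    refine congrArg card (filter_congr fun y _ =>
      ⟨fun ⟨⟨_, hy⟩, hWy⟩ => ⟨hWy ▸ mem_sup_right (mem_span_singleton_self y), hy⟩,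
        fun ⟨hyY, hy⟩ => ⟨⟨hYT hyY, hy⟩, ?_⟩⟩)
    exact eq_of_le_of_finrank_eq (sup_le hWY (hspan_le hyY))
      (by rw [finrank_sup_span_of_apply_eq_one f hW hy, hrank])
  rw [← card_filter_mem_apply_eq_one f hT, card_eq_sum_card_fiberwise hmaps, sum_congr rfl hfiber,
    sum_const, smul_eq_mul, mul_comm]

lemma card_lowerCovers_inf_ker_eq {X W : Submodule F V} (hX : ¬ X ≤ ker f)
    (hW : W ∈ lowerCovers (X ⊓ ker f)) :
    #{Y ∈ lowerCovers X | ¬ Y ≤ ker f ∧ Y ⊓ ker f = W} = Fintype.card F := by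
  rw [mem_lowerCovers] at hW
  have hX' := finrank_inf_ker_add_one f hX
  have hWker : W ≤ ker f := hW.1.trans inf_le_right
  have hfilter : ({Y ∈ lowerCovers X | ¬ Y ≤ ker f ∧ Y ⊓ ker f = W} :
      Finset _) = {Y ∈ upperCovers W | Y ≤ X ∧ ¬ Y ≤ ker f} := by
    ext Y
    simp only [mem_filter, mem_lowerCovers, mem_upperCovers]
    constructor
    · rintro ⟨⟨hYX, -⟩, hY, rfl⟩
      exact ⟨⟨inf_le_left, (finrank_inf_ker_add_one f hY).symm⟩, hYX, hY⟩
    · rintro ⟨⟨hWY, hrank⟩, hYX, hY⟩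
      exact ⟨⟨hYX, by omega⟩, hY, inf_ker_eq_of_le_of_finrank_eq f hWker hWY hY hrank⟩
  have hcount := pow_finrank_mul_card_upperCovers_not_le_ker f hWker
    (hW.1.trans inf_le_left) hX
  rw [hW.2, pow_succ] at hcount
  rw [hfilter]
  exact Nat.eq_of_mul_eq_mul_left (pow_pos Fintype.card_pos _) hcount

lemma sum_lowerCovers_not_le_ker_inf_ker {X : Submodule F V} (hX : ¬ X ≤ ker f)
    (u : Submodule F V → ℝ) :
    ∑ Y ∈ lowerCovers X with ¬ Y ≤ ker f, u (Y ⊓ ker f) =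
      Fintype.card F * ∑ W ∈ lowerCovers (X ⊓ ker f), u W := by
  have hmaps : ∀ Y ∈ ({Y ∈ lowerCovers X | ¬ Y ≤ ker f} : Finset _),
      Y ⊓ ker f ∈ lowerCovers (X ⊓ ker f) := by
    intro Y hY
    simp only [mem_filter, mem_lowerCovers] at hY ⊢
    have := finrank_inf_ker_add_one f hX
    have := finrank_inf_ker_add_one f hY.2
    exact ⟨inf_le_inf_right _ hY.1.1, by omega⟩
  rw [← sum_fiberwise_of_maps_to' hmaps, mul_sum]
  refine sum_congr rfl fun W hW => ?_
  rw [sum_const, filter_filter, card_lowerCovers_inf_ker_eq f hX hW, nsmul_eq_mul]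

noncomputable def traceLift (u : Submodule F V → ℝ) (Y : Submodule F V) : ℝ :=
  if Y ≤ ker f then 0 else u (Y ⊓ ker f)

lemma mulVec_traceLift_of_le_ker (φ : ℝ) (u : Submodule F V → ℝ) (hf : f ≠ 0)
    {X : Submodule F V} (hX : X ≤ ker f) :
    ((Matrix.of fun X Y : Submodule F V => adjEnt (Fintype.card F) φ X Y) *ᵥ traceLift f u) X =
      φ * Fintype.card F ^ finrank F (ker f) * u X := by
  have htop : ¬ (⊤ : Submodule F V) ≤ ker f := by
    rwa [top_le_iff, LinearMap.ker_eq_top]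
  have hcount := pow_finrank_mul_card_upperCovers_not_le_ker f hX le_top htop
  simp only [le_top, true_and] at hcount
  rw [top_inf_eq] at hcount
  replace hcount : (Fintype.card F : ℝ) ^ finrank F X * #{Y ∈ upperCovers X | ¬ Y ≤ ker f} =
      (Fintype.card F : ℝ) ^ finrank F (ker f) := by
    exact_mod_cast hcount
  have hlower : ∑ Y ∈ lowerCovers X, traceLift f u Y = 0 :=
    sum_eq_zero fun Y hY => if_pos ((mem_lowerCovers.mp hY).1.trans hX)
  have hupper : ∑ Y ∈ upperCovers X, traceLift f u Y =
      #{Y ∈ upperCovers X | ¬ Y ≤ ker f} * u X := by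
    simp only [traceLift, sum_ite, sum_const_zero, zero_add, ← nsmul_eq_mul, ← sum_const]
    refine sum_congr rfl fun Y hY => ?_
    simp only [mem_filter, mem_upperCovers] at hY
    rw [inf_ker_eq_of_le_of_finrank_eq f hX hY.1.1 hY.2 hY.1.2]
  rw [mulVec_adjEnt_apply, hlower, hupper, traceLift, if_pos hX]
  linear_combination φ * u X * hcount

lemma mulVec_of_not_le_ker (φ : ℝ) {u : Submodule F V → ℝ}
    (hu : ∀ Y, ¬ Y ≤ ker f → u Y = 0) {X : Submodule F V} (hX : ¬ X ≤ ker f) :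
    ((Matrix.of fun X Y : Submodule F V => adjEnt (Fintype.card F) φ X Y) *ᵥ u) X =
      u (X ⊓ ker f) := by
  have hX' := finrank_inf_ker_add_one f hX
  have hlower : ∑ Y ∈ lowerCovers X, u Y = u (X ⊓ ker f) := by
    refine sum_eq_single_of_mem _ (mem_lowerCovers.mpr ⟨inf_le_left, hX'.symm⟩)
      fun Y hY hne => ?_
    rw [mem_lowerCovers] at hY
    refine hu Y fun hYker => hne (eq_of_le_of_finrank_eq (le_inf hY.1 hYker) ?_)
    omega
  have hupper : ∑ Y ∈ upperCovers X, u Y = 0 :=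
    sum_eq_zero fun Y hY => hu Y fun h => hX ((mem_upperCovers.mp hY).1.trans h)
  rw [mulVec_adjEnt_apply, hlower, hupper, hu X hX]
  ring

lemma mulVec_traceLift_of_not_le_ker (φ : ℝ) {u : Submodule F V → ℝ}
    (hu : ∀ Y, ¬ Y ≤ ker f → u Y = 0) {X : Submodule F V} (hX : ¬ X ≤ ker f) :
    ((Matrix.of fun X Y : Submodule F V => adjEnt (Fintype.card F) φ X Y) *ᵥ traceLift f u) X =
      Fintype.card F *
        ((Matrix.of fun X Y : Submodule F V => adjEnt (Fintype.card F) φ X Y) *ᵥ u)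
          (X ⊓ ker f) := by
  have hlower : ∑ Y ∈ lowerCovers X, traceLift f u Y =
      Fintype.card F * ∑ W ∈ lowerCovers (X ⊓ ker f), u W := by
    simp only [← sum_lowerCovers_not_le_ker_inf_ker f hX, traceLift, sum_ite, sum_const_zero,
      zero_add]
  have hupper : ∑ Y ∈ upperCovers X, traceLift f u Y =
      ∑ U ∈ upperCovers (X ⊓ ker f), u U := by
    have hYker : ∀ Y ∈ upperCovers X, traceLift f u Y = u (Y ⊓ ker f) :=
      fun Y hY => if_neg fun h => hX ((mem_upperCovers.mp hY).1.trans h)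
    rw [sum_congr rfl hYker, sum_upperCovers_inf_ker f hX]
    exact sum_filter_of_ne fun U _ hU => not_not.mp (mt (hu U) hU)
  rw [mulVec_adjEnt_apply, mulVec_adjEnt_apply, hlower, hupper, traceLift, if_neg hX,
    ← finrank_inf_ker_add_one f hX]
  ring

/-- `h₁` and `h₂` are the eigenvalue equation evaluated at a subspace inside, resp. outside,
`ker f`. -/
theorem mulVec_smul_add_smul_traceLift (φ : ℝ) (hf : f ≠ 0) {u : Submodule F V → ℝ}
    (hu₀ : ∀ Y, ¬ Y ≤ ker f → u Y = 0) {ℓ : ℝ}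
    (hu : ∀ X ≤ ker f,
      ((Matrix.of fun X Y : Submodule F V => adjEnt (Fintype.card F) φ X Y) *ᵥ u) X = ℓ * u X)
    {a s μ : ℝ} (h₁ : a * ℓ + s * (φ * Fintype.card F ^ finrank F (ker f)) = μ * a)
    (h₂ : a + s * (Fintype.card F * ℓ) = μ * s) :
    (Matrix.of fun X Y : Submodule F V => adjEnt (Fintype.card F) φ X Y) *ᵥ
        (a • u + s • traceLift f u) = μ • (a • u + s • traceLift f u) := by
  funext X
  simp only [mulVec_add, mulVec_smul, Pi.add_apply, Pi.smul_apply, smul_eq_mul]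
  by_cases hX : X ≤ ker f
  · rw [hu X hX, mulVec_traceLift_of_le_ker f φ u hf hX, traceLift, if_pos hX]
    linear_combination u X * h₁
  · rw [mulVec_of_not_le_ker f φ hu₀ hX, mulVec_traceLift_of_not_le_ker f φ hu₀ hX,
      hu _ inf_le_right, traceLift, if_neg hX, hu₀ X hX]
    linear_combination u (X ⊓ ker f) * h₂

end Hyperplane

section Eigenvalues

variable {q : ℕ} (φ : ℝ) {n k : ℕ}

lemma lamEV_mul_sub_one (hq : (q : ℝ) ≠ 1) :
    lamEV q φ n k * (q - 1) = φ * q ^ (n - k) - q ^ k :=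
  div_mul_cancel₀ _ (sub_ne_zero.mpr hq)

lemma lamEV_succ (hq : (q : ℝ) ≠ 1) (hk : k ≤ n) :
    lamEV q φ (n + 1) k = q * lamEV q φ n k + q ^ k := by
  rw [lamEV, lamEV, Nat.sub_add_comm hk, pow_succ]
  field_simp [sub_ne_zero.mpr hq]
  ring

lemma lamEV_succ_succ (hq : (q : ℝ) ≠ 1) :
    lamEV q φ (n + 1) (k + 1) = q * lamEV q φ n k - φ * q ^ (n - k) := by
  rw [lamEV, lamEV, Nat.add_sub_add_right, pow_succ]
  field_simp [sub_ne_zero.mpr hq]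
  ring

end Eigenvalues

section LastCoordinate

variable {F : Type} [Field F] [Fintype F] {n : ℕ}

lemma finrank_H0 : finrank F (H0 F n) = n := by
  have htop : ¬ (⊤ : Submodule F (Fin (n + 1) → F)) ≤ H0 F n := fun h => by
    simpa [H0] using h (mem_top (x := Pi.single (Fin.last n) 1))
  have := finrank_inf_ker_add_one _ htop
  rw [top_inf_eq, finrank_top, finrank_fin_fun] at this
  exact Nat.add_right_cancel this

variable (v : {X : Submodule F (Fin (n + 1) → F) // X ≤ H0 F n} → ℝ)

lemma theta_eq_traceLift :
    theta F n v =
      traceLift (LinearMap.proj (R := F) (φ := fun _ => F) (Fin.last n)) (iota F n v) := by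
  classical
  funext Y
  change _ = if Y ≤ H0 F n then 0 else iota F n v (Y ⊓ H0 F n)
  rw [theta, iota, dif_pos inf_le_right]

lemma mulVec_iota_of_le (q : ℕ) (φ : ℝ) {X : Submodule F (Fin (n + 1) → F)}
    (hX : X ≤ H0 F n) :
    ((Matrix.of fun X Y : Submodule F (Fin (n + 1) → F) => adjEnt q φ X Y) *ᵥ iota F n v) X =
      ((Matrix.of fun X Y : {X : Submodule F (Fin (n + 1) → F) // X ≤ H0 F n} =>
        adjEnt q φ X.1 Y.1) *ᵥ v) ⟨X, hX⟩ := by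
  classical
  simp only [mulVec, dotProduct, of_apply]
  rw [← sum_filter_of_ne (p := (· ≤ H0 F n)) fun Y _ hY => ?_,
    sum_subtype (p := (· ≤ H0 F n)) _ fun Y => by simp]
  · exact sum_congr rfl fun Y _ => by rw [iota, dif_pos Y.2]
  · by_contra h
    simp [iota, h] at hY

end LastCoordinate

theorem stmt_18_general (q n k : ℕ) (F : Type) [Field F] [Fintype F] (hq : Fintype.card F = q)
    (φ : ℝ) (hk : k ≤ n)
    (v : {X : Submodule F (Fin (n + 1) → F) // X ≤ H0 F n} → ℝ)
    (hv : (Matrix.of fun X Y : {X : Submodule F (Fin (n + 1) → F) // X ≤ H0 F n} =>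
        adjEnt q φ X.1 Y.1).mulVec v = lamEV q φ n k • v) :
    (Matrix.of fun X Y : Submodule F (Fin (n + 1) → F) => adjEnt q φ X Y).mulVec
        ((q : ℝ) ^ k • iota F n v + theta F n v) =
      lamEV q φ (n + 1) k • ((q : ℝ) ^ k • iota F n v + theta F n v) ∧
    (Matrix.of fun X Y : Submodule F (Fin (n + 1) → F) => adjEnt q φ X Y).mulVec
        ((φ * (q : ℝ) ^ (n - k)) • iota F n v - theta F n v) =
      lamEV q φ (n + 1) (k + 1) • ((φ * (q : ℝ) ^ (n - k)) • iota F n v - theta F n v) := by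
  subst hq
  set π := LinearMap.proj (R := F) (φ := fun _ : Fin (n + 1) => F) (Fin.last n)
  have hπ : π ≠ 0 := fun h => by
    simpa [π] using LinearMap.congr_fun h (Pi.single (Fin.last n) 1)
  have hq : (Fintype.card F : ℝ) ≠ 1 := by exact_mod_cast Fintype.one_lt_card.ne'
  have hι₀ : ∀ Y, ¬ Y ≤ ker π → iota F n v Y = 0 := fun Y hY => dif_neg hY
  have hι : ∀ X ≤ ker π, ((Matrix.of fun X Y : Submodule F (Fin (n + 1) → F) =>
      adjEnt (Fintype.card F) φ X Y) *ᵥ iota F n v) X =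
        lamEV (Fintype.card F) φ n k * iota F n v X := fun X hX => by
    rw [mulVec_iota_of_le v _ φ hX, hv, Pi.smul_apply, smul_eq_mul, iota,
      dif_pos (show X ≤ H0 F n from hX)]
  have hdim : finrank F (ker π) = n := finrank_H0
  have hpow : (Fintype.card F : ℝ) ^ k * Fintype.card F ^ (n - k) = Fintype.card F ^ n := by
    rw [← pow_add, Nat.add_sub_cancel' hk]
  have e₀ := lamEV_mul_sub_one φ (n := n) (k := k) hq
  have e₁ := lamEV_succ φ hq hk
  have e₂ := lamEV_succ_succ φ (n := n) (k := k) hq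
  rw [theta_eq_traceLift, sub_eq_add_neg, ← neg_one_smul ℝ (traceLift π _)]
  constructor
  · simpa only [one_smul] using mulVec_smul_add_smul_traceLift π φ hπ hι₀ hι (s := 1)
      (by rw [hdim]; linear_combination -(Fintype.card F : ℝ) ^ k * (e₁ + e₀) - φ * hpow)
      (by linear_combination -e₁)
  · exact mulVec_smul_add_smul_traceLift π φ hπ hι₀ hι
      (by rw [hdim]
          linear_combination -φ * (Fintype.card F : ℝ) ^ (n - k) * (e₂ + e₀) + φ * hpow)
      (by linear_combination e₂)

theorem stmt_18 (q n k : ℕ) (F : Type) [Field F] [Fintype F] (hq : Fintype.card F = q)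
    (φ : ℝ) (hφ : 0 < φ) (hk : k ≤ n)
    (v : {X : Submodule F (Fin (n + 1) → F) // X ≤ H0 F n} → ℝ)
    (hv : (Matrix.of fun X Y : {X : Submodule F (Fin (n + 1) → F) // X ≤ H0 F n} =>
        adjEnt q φ X.1 Y.1).mulVec v = lamEV q φ n k • v) :
    (Matrix.of fun X Y : Submodule F (Fin (n + 1) → F) => adjEnt q φ X Y).mulVec
        ((q : ℝ) ^ k • iota F n v + theta F n v) =
      lamEV q φ (n + 1) k • ((q : ℝ) ^ k • iota F n v + theta F n v) ∧
    (Matrix.of fun X Y : Submodule F (Fin (n + 1) → F) => adjEnt q φ X Y).mulVec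
        ((φ * (q : ℝ) ^ (n - k)) • iota F n v - theta F n v) =
      lamEV q φ (n + 1) (k + 1) • ((φ * (q : ℝ) ^ (n - k)) • iota F n v - theta F n v) :=
  stmt_18_general q n k F hq φ hk v hv
end
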